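/- Let γ < 1 and let v : [0,1] → ℝ be locally absolutely continuous on (0,1], continuous at 0 with v(0) = 0, and suppose ∫₀¹ x^γ (v'(x))² dx < ∞. Then ∫₀¹ x^{γ−2} v(x)² dx ≤ (4/(1−γ)²) ∫₀¹ x^γ (v'(x))² dx. -/

import Mathlib

open MeasureTheory Set
open scoped ENNReal

/-!
Hardy's argument. With `δ = (1 - γ) / 2`, Cauchy–Schwarz against the weight `y ^ (1 - δ)` gives
`v(x)² ≤ (x^δ / δ) ∫₀ˣ y^(1-δ) v'(y)² dy`. Multiplying by `x^(γ-2)` and integrating, Tonelli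
leaves the kernel `∫_y^∞ x^(-1-δ) / δ dx = y^(-δ) / δ²`; since `y^(1-δ) y^(-δ) = y^γ` and
`1 / δ² = 4 / (1 - γ)²`, this is the claimed inequality.
-/

theorem setLIntegral_Ioc_zero_rpow {r x : ℝ} (hr : -1 < r) (hx : 0 ≤ x) :
    ∫⁻ t in Ioc 0 x, ENNReal.ofReal (t ^ r) = ENNReal.ofReal (x ^ (r + 1) / (r + 1)) := by
  rw [← ofReal_integral_eq_lintegral_ofReal (intervalIntegral.intervalIntegrable_rpow' hr).1
      ((ae_restrict_mem measurableSet_Ioc).mono fun t ht => Real.rpow_nonneg ht.1.le r),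
    ← intervalIntegral.integral_of_le hx, integral_rpow (Or.inl hr), Real.zero_rpow (by linarith),
    sub_zero]

theorem setLIntegral_Ioi_rpow_of_lt {r c : ℝ} (hr : r < -1) (hc : 0 < c) :
    ∫⁻ t in Ioi c, ENNReal.ofReal (t ^ r) = ENNReal.ofReal (-c ^ (r + 1) / (r + 1)) := by
  rw [← ofReal_integral_eq_lintegral_ofReal (integrableOn_Ioi_rpow_of_lt hr hc)
      ((ae_restrict_mem measurableSet_Ioi).mono fun t ht => Real.rpow_nonneg (hc.trans ht).le r),
    integral_Ioi_rpow_of_lt hr hc]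

theorem ofReal_sq_integral_le_lintegral_mul_lintegral {α : Type*} [MeasurableSpace α]
    {μ : Measure α} {w ρ : α → ℝ} (hw : AEMeasurable w μ) (hρ : AEMeasurable ρ μ)
    (hρ_pos : ∀ᵐ a ∂μ, 0 < ρ a) :
    ENNReal.ofReal ((∫ a, w a ∂μ) ^ 2) ≤
      (∫⁻ a, ENNReal.ofReal (ρ a * w a ^ 2) ∂μ) * ∫⁻ a, ENNReal.ofReal (ρ a)⁻¹ ∂μ := by
  set A := ∫⁻ a, ENNReal.ofReal (ρ a * w a ^ 2) ∂μ
  set B := ∫⁻ a, ENNReal.ofReal (ρ a)⁻¹ ∂μ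
  have h_split : ∀ᵐ a ∂μ, ‖w a‖ₑ =
      ENNReal.ofReal (ρ a * w a ^ 2) ^ (2⁻¹ : ℝ) * ENNReal.ofReal (ρ a)⁻¹ ^ (2⁻¹ : ℝ) := by
    filter_upwards [hρ_pos] with a ha
    rw [← ENNReal.mul_rpow_of_nonneg _ _ (by norm_num), ← ENNReal.ofReal_mul (by positivity),
      mul_right_comm, mul_inv_cancel₀ ha.ne', one_mul,
      ENNReal.ofReal_rpow_of_nonneg (sq_nonneg _) (by norm_num), inv_eq_one_div,
      ← Real.sqrt_eq_rpow, Real.sqrt_sq_eq_abs, Real.enorm_eq_ofReal_abs]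
  have h_holder : ∫⁻ a, ‖w a‖ₑ ∂μ ≤ A ^ (2⁻¹ : ℝ) * B ^ (2⁻¹ : ℝ) := by
    rw [lintegral_congr_ae h_split]
    exact ENNReal.lintegral_mul_norm_pow_le (hρ.mul (hw.pow_const 2)).ennreal_ofReal
      hρ.inv.ennreal_ofReal (by norm_num) (by norm_num) (by norm_num)
  calc ENNReal.ofReal ((∫ a, w a ∂μ) ^ 2) = ‖∫ a, w a ∂μ‖ₑ ^ 2 := by
        rw [Real.enorm_eq_ofReal_abs, ← ENNReal.ofReal_pow (abs_nonneg _), sq_abs]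
    _ ≤ (A ^ (2⁻¹ : ℝ) * B ^ (2⁻¹ : ℝ)) ^ 2 :=
        pow_le_pow_left₀ zero_le ((enorm_integral_le_lintegral_enorm _).trans h_holder) 2
    _ = A * B := by
        rw [mul_pow, ← Nat.cast_ofNat, ENNReal.rpow_inv_natCast_pow two_ne_zero,
          ENNReal.rpow_inv_natCast_pow two_ne_zero]

theorem setLIntegral_Ioc_mul_setLIntegral_Ioc_swap {c g : ℝ → ℝ≥0∞} (hc : Measurable c)
    (hg : Measurable g) (a b : ℝ) :
    ∫⁻ x in Ioc a b, c x * ∫⁻ y in Ioc a x, g y =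
      ∫⁻ y in Ioc a b, g y * ∫⁻ x in Icc y b, c x := by
  set K : ℝ → ℝ → ℝ≥0∞ := fun x y => if y ≤ x then c x * g y else 0
  have hK : Measurable (Function.uncurry K) :=
    Measurable.ite (measurableSet_le measurable_snd measurable_fst)
      ((hc.comp measurable_fst).mul (hg.comp measurable_snd)) measurable_const
  calc ∫⁻ x in Ioc a b, c x * ∫⁻ y in Ioc a x, g y
      = ∫⁻ x in Ioc a b, ∫⁻ y in Ioc a b, K x y := by
        refine setLIntegral_congr_fun measurableSet_Ioc fun x hx => ?_
        have hKx : K x = (Iic x).indicator fun y => c x * g y := by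
          ext y; simp [K, indicator_apply]
        rw [hKx, lintegral_indicator measurableSet_Iic, Measure.restrict_restrict measurableSet_Iic,
          inter_comm, Ioc_inter_Iic, min_eq_right hx.2, lintegral_const_mul _ hg]
    _ = ∫⁻ y in Ioc a b, ∫⁻ x in Ioc a b, K x y := lintegral_lintegral_swap hK.aemeasurable
    _ = ∫⁻ y in Ioc a b, g y * ∫⁻ x in Icc y b, c x := by
        refine setLIntegral_congr_fun measurableSet_Ioc fun y hy => ?_
        have hKy : (K · y) = (Ici y).indicator fun x => c x * g y := by
          ext x; simp [K, indicator_apply]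
        have hIcc : Ici y ∩ Ioc a b = Icc y b := by
          ext x
          simp only [mem_inter_iff, mem_Ici, mem_Ioc, mem_Icc]
          exact ⟨fun h => ⟨h.1, h.2.2⟩, fun h => ⟨h.1, hy.1.trans_le h.1, h.2⟩⟩
        rw [hKy, lintegral_indicator measurableSet_Ici, Measure.restrict_restrict measurableSet_Ici,
          hIcc, lintegral_mul_const _ hc, mul_comm]

theorem ofReal_sq_setIntegral_Ioc_zero_le {δ x : ℝ} (hδ : 0 < δ) (hx : 0 ≤ x) {w : ℝ → ℝ}
    (hw : AEMeasurable w) :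
    ENNReal.ofReal ((∫ y in Ioc 0 x, w y) ^ 2) ≤
      (∫⁻ y in Ioc 0 x, ENNReal.ofReal (y ^ (1 - δ) * w y ^ 2)) * ENNReal.ofReal (x ^ δ / δ) := by
  have hρ_pos : ∀ᵐ y ∂volume.restrict (Ioc 0 x), 0 < y ^ (1 - δ) :=
    (ae_restrict_mem measurableSet_Ioc).mono fun y hy => Real.rpow_pos_of_pos hy.1 _
  refine (ofReal_sq_integral_le_lintegral_mul_lintegral hw.restrict
    (by fun_prop) hρ_pos).trans_eq ?_
  congr 1
  rw [show x ^ δ / δ = x ^ (δ - 1 + 1) / (δ - 1 + 1) by ring_nf,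
    ← setLIntegral_Ioc_zero_rpow (by linarith) hx]
  refine setLIntegral_congr_fun measurableSet_Ioc fun y hy => ?_
  rw [← Real.rpow_neg hy.1.le, neg_sub]

theorem setLIntegral_Icc_rpow_neg_one_sub_div_le {δ y b : ℝ} (hδ : 0 < δ) (hy : 0 < y) :
    ∫⁻ x in Icc y b, ENNReal.ofReal (x ^ (-1 - δ) / δ) ≤ ENNReal.ofReal (y ^ (-δ) / δ ^ 2) := by
  have h_const : ∀ x, ENNReal.ofReal (x ^ (-1 - δ) / δ) =
      ENNReal.ofReal (x ^ (-1 - δ)) * ENNReal.ofReal δ⁻¹ := fun x => by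
    rw [div_eq_mul_inv, ENNReal.ofReal_mul' (by positivity)]
  calc _ ≤ ∫⁻ x in Ioi y, ENNReal.ofReal (x ^ (-1 - δ) / δ) :=
        (lintegral_mono_set Icc_subset_Ici_self).trans_eq (setLIntegral_congr Ioi_ae_eq_Ici).symm
    _ = ENNReal.ofReal (y ^ (-δ) / δ ^ 2) := by
        simp_rw [h_const]
        rw [lintegral_mul_const _ (by fun_prop), setLIntegral_Ioi_rpow_of_lt (by linarith) hy,
          show -1 - δ + 1 = -δ by ring, neg_div_neg_eq,
          ← ENNReal.ofReal_mul (div_nonneg (Real.rpow_nonneg hy.le _) hδ.le)]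
        ring_nf

theorem hardy_inequality_Ioc_zero {γ : ℝ} (hγ : γ < 1) {w : ℝ → ℝ}
    (hw : Measurable w) (b : ℝ) :
    ∫⁻ x in Ioc 0 b, ENNReal.ofReal (x ^ (γ - 2) * (∫ y in Ioc 0 x, w y) ^ 2) ≤
      ENNReal.ofReal (4 / (1 - γ) ^ 2) * ∫⁻ x in Ioc 0 b, ENNReal.ofReal (x ^ γ * w x ^ 2) := by
  obtain ⟨δ, hδ, rfl⟩ : ∃ δ, 0 < δ ∧ γ = 1 - 2 * δ := ⟨(1 - γ) / 2, by linarith, by ring⟩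
  set g : ℝ → ℝ≥0∞ := fun y => ENNReal.ofReal (y ^ (1 - δ) * w y ^ 2)
  set c : ℝ → ℝ≥0∞ := fun x => ENNReal.ofReal (x ^ (-1 - δ) / δ)
  have h_pointwise : ∀ x ∈ Ioc 0 b,
      ENNReal.ofReal (x ^ (1 - 2 * δ - 2) * (∫ y in Ioc 0 x, w y) ^ 2) ≤
        c x * ∫⁻ y in Ioc 0 x, g y := by
    intro x hx
    have hpow : x ^ (-1 - δ) / δ = x ^ (1 - 2 * δ - 2) * (x ^ δ / δ) := by
      rw [mul_div_assoc', ← Real.rpow_add hx.1]; ring_nf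
    calc _ = ENNReal.ofReal (x ^ (1 - 2 * δ - 2)) * ENNReal.ofReal ((∫ y in Ioc 0 x, w y) ^ 2) :=
          ENNReal.ofReal_mul (Real.rpow_nonneg hx.1.le _)
      _ ≤ ENNReal.ofReal (x ^ (1 - 2 * δ - 2)) *
            ((∫⁻ y in Ioc 0 x, g y) * ENNReal.ofReal (x ^ δ / δ)) := by
          gcongr; exact ofReal_sq_setIntegral_Ioc_zero_le hδ hx.1.le hw.aemeasurable
      _ = c x * ∫⁻ y in Ioc 0 x, g y := by
          rw [show c x = _ from congrArg ENNReal.ofReal hpow,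
            ENNReal.ofReal_mul (Real.rpow_nonneg hx.1.le _)]
          ring
  have h_tail : ∀ y ∈ Ioc 0 b, g y * ∫⁻ x in Icc y b, c x ≤
      ENNReal.ofReal (1 / δ ^ 2) * ENNReal.ofReal (y ^ (1 - 2 * δ) * w y ^ 2) := by
    intro y hy
    have hpow : y ^ (1 - 2 * δ) = y ^ (1 - δ) * y ^ (-δ) := by
      rw [← Real.rpow_add hy.1]; ring_nf
    calc g y * ∫⁻ x in Icc y b, c x ≤ g y * ENNReal.ofReal (y ^ (-δ) / δ ^ 2) := by
          gcongr; exact setLIntegral_Icc_rpow_neg_one_sub_div_le hδ hy.1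
      _ = _ := by
          simp only [g]
          rw [← ENNReal.ofReal_mul (mul_nonneg (Real.rpow_nonneg hy.1.le _) (sq_nonneg _)),
            ← ENNReal.ofReal_mul (by positivity), hpow]
          ring_nf
  calc _ ≤ ∫⁻ x in Ioc 0 b, c x * ∫⁻ y in Ioc 0 x, g y :=
        setLIntegral_mono' measurableSet_Ioc h_pointwise
    _ = ∫⁻ y in Ioc 0 b, g y * ∫⁻ x in Icc y b, c x :=
        setLIntegral_Ioc_mul_setLIntegral_Ioc_swap (by fun_prop) (by fun_prop) 0 b
    _ ≤ _ := setLIntegral_mono' measurableSet_Ioc h_tail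
    _ = _ := by
        rw [lintegral_const_mul' _ _ ENNReal.ofReal_ne_top]
        congr 2
        ring

theorem hardy_poincare_gamma_lt_one_general (γ : ℝ) (hγ : γ < 1) (v : ℝ → ℝ)
    (hAC : ∀ x ∈ Ioc (0:ℝ) 1, v x = ∫ y in (0:ℝ)..x, deriv v y) :
    ∫⁻ x in Ioc (0:ℝ) 1, ENNReal.ofReal (x ^ (γ - 2) * (v x) ^ 2) ≤
      ENNReal.ofReal (4 / (1 - γ) ^ 2) *
        ∫⁻ x in Ioc (0:ℝ) 1, ENNReal.ofReal (x ^ γ * (deriv v x) ^ 2) := by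
  calc _ = ∫⁻ x in Ioc 0 1, ENNReal.ofReal (x ^ (γ - 2) * (∫ y in Ioc 0 x, deriv v y) ^ 2) :=
        setLIntegral_congr_fun measurableSet_Ioc fun x hx => by
          rw [hAC x hx, intervalIntegral.integral_of_le hx.1.le]
    _ ≤ _ := hardy_inequality_Ioc_zero hγ (measurable_deriv v) 1

/-- Hardy–Poincaré inequality with weight `x^γ` for all exponents `γ < 1`. -/
theorem hardy_poincare_gamma_lt_one (γ : ℝ) (hγ : γ < 1) (v : ℝ → ℝ)
    (hv0 : v 0 = 0) (hvcont : ContinuousAt v 0)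
    (hAC : ∀ x ∈ Ioc (0:ℝ) 1, v x = ∫ y in (0:ℝ)..x, deriv v y)
    (hfin : ∫⁻ x in Ioc (0:ℝ) 1, ENNReal.ofReal (x ^ γ * (deriv v x) ^ 2) < ⊤) :
    ∫⁻ x in Ioc (0:ℝ) 1, ENNReal.ofReal (x ^ (γ - 2) * (v x) ^ 2) ≤
      ENNReal.ofReal (4 / (1 - γ) ^ 2) *
        ∫⁻ x in Ioc (0:ℝ) 1, ENNReal.ofReal (x ^ γ * (deriv v x) ^ 2) :=
  hardy_poincare_gamma_lt_one_general γ hγ v hAC
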